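/- For every n ≥ 0, the map that takes a Dyck path of semilength n with all peaks at even height, splits its 2n steps into n contiguous pairs, and replaces each pair (U,U) by U, each pair (D,U) by F, and each pair (D,D) by D, is a bijection from the set of Dyck paths of semilength n with all peaks at even height onto the set of Motzkin paths of length n with no flatstep at ground level. -/

import Mathlib

/-- A Dyck path: each step is +1 (upstep U) or -1 (downstep D), all partial sums
are nonnegative, and the total sum is 0. -/
def IsDyckPath (P : List ℤ) : Prop :=
  (∀ s ∈ P, s = 1 ∨ s = -1) ∧ (∀ k, 0 ≤ (P.take k).sum) ∧ P.sum = 0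

/-- A Motzkin path: each step is +1 (U), 0 (F), or -1 (D), all partial sums
are nonnegative, and the total sum is 0. -/
def IsMotzkinPath (M : List ℤ) : Prop :=
  (∀ s ∈ M, s = 1 ∨ s = 0 ∨ s = -1) ∧ (∀ k, 0 ≤ (M.take k).sum) ∧ M.sum = 0

/-- A peak at position `i`: an upstep at `i` immediately followed by a downstep. -/
def IsPeak (P : List ℤ) (i : ℕ) : Prop :=
  P[i]? = some 1 ∧ P[i + 1]? = some (-1)

/-- The height of the peak at position `i`: the level reached just after the upstep. -/
def peakHeight (P : List ℤ) (i : ℕ) : ℤ := (P.take (i + 1)).sum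

/-- Every peak is at odd height; by convention the empty path has one peak at height 0
(so `AllPeaksOdd []` is false). -/
def AllPeaksOdd (P : List ℤ) : Prop :=
  (P = [] → Odd (0 : ℤ)) ∧ ∀ i, IsPeak P i → Odd (peakHeight P i)

/-- Every peak is at even height; by convention the empty path has one peak at height 0. -/
def AllPeaksEven (P : List ℤ) : Prop :=
  (P = [] → Even (0 : ℤ)) ∧ ∀ i, IsPeak P i → Even (peakHeight P i)

/-- The Motzkin path has no flatstep at ground level. -/
def NoGroundFlat (M : List ℤ) : Prop :=
  ∀ i, M[i]? = some 0 → (M.take i).sum ≠ 0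

/-- Replacement of a contiguous pair of Dyck steps by a Motzkin step:
(U,U) ↦ U, (D,U) ↦ F, (D,D) ↦ D. -/
def pairStep (a b : ℤ) : ℤ :=
  if a = 1 ∧ b = 1 then 1
  else if a = -1 ∧ b = 1 then 0
  else if a = -1 ∧ b = -1 then -1
  else 0

/-- Split a list of steps into contiguous pairs and replace each pair via `pairStep`. -/
def pairContract (P : List ℤ) : List ℤ :=
  (List.range (P.length / 2)).map fun k => pairStep (P.getD (2 * k) 0) (P.getD (2 * k + 1) 0)

/-- The number of downsteps ending at ground level. -/
def groundDownCount (P : List ℤ) : ℕ :=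
  ((Finset.range P.length).filter fun i =>
    P[i]? = some (-1) ∧ (P.take (i + 1)).sum = 0).card

/-- The number of flatsteps at ground level. -/
def groundFlatCount (M : List ℤ) : ℕ :=
  ((Finset.range M.length).filter fun i =>
    M[i]? = some 0 ∧ (M.take i).sum = 0).card

/-- The number of peaks. -/
def peakCount (P : List ℤ) : ℕ :=
  ((Finset.range P.length).filter fun i =>
    P[i]? = some 1 ∧ P[i + 1]? = some (-1)).card

/-- The number of occurrences of an upstep immediately followed by an upstep. -/
def uuCount (M : List ℤ) : ℕ :=
  ((Finset.range M.length).filter fun i =>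
    M[i]? = some 1 ∧ M[i + 1]? = some 1).card

/-- The number of occurrences of a flatstep immediately followed by an upstep. -/
def fuCount (M : List ℤ) : ℕ :=
  ((Finset.range M.length).filter fun i =>
    M[i]? = some 0 ∧ M[i + 1]? = some 1).card

def firstE (s : ℤ) : ℤ := if s = 1 then 1 else -1
def secondE (s : ℤ) : ℤ := if s = -1 then -1 else 1

def expandPath : List ℤ → List ℤ
  | [] => []
  | s :: M => firstE s :: secondE s :: expandPath M

lemma expandPath_length (M : List ℤ) : (expandPath M).length = 2 * M.length := by
  induction M with
  | nil => rfl
  | cons s M ih => simp only [expandPath, List.length_cons, ih]; omega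

lemma pairContract_nil : pairContract [] = [] := rfl

lemma pairContract_cons (a b : ℤ) (l : List ℤ) :
    pairContract (a :: b :: l) = pairStep a b :: pairContract l := by
  unfold pairContract
  have h : (a :: b :: l).length / 2 = l.length / 2 + 1 := by simp; omega
  rw [h, List.range_succ_eq_map, List.map_cons, List.map_map]
  refine congrArg₂ _ (by simp) ?_
  refine List.map_congr_left ?_
  intro k _
  have e1 : 2 * Nat.succ k = (2 * k + 1) + 1 := by omega
  have e2 : 2 * Nat.succ k + 1 = (2 * k + 1 + 1) + 1 := by omega
  simp only [Function.comp_apply, e1, e2, List.getD_cons_succ]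

lemma pairContract_length (P : List ℤ) : (pairContract P).length = P.length / 2 := by
  simp [pairContract]

lemma steps3_pairContract (P : List ℤ) : ∀ s ∈ pairContract P, s = 1 ∨ s = 0 ∨ s = -1 := by
  intro s hs
  simp only [pairContract, List.mem_map] at hs
  obtain ⟨k, -, rfl⟩ := hs
  unfold pairStep
  split_ifs <;> simp

lemma expand_steps (M : List ℤ) : ∀ s ∈ expandPath M, s = 1 ∨ s = -1 := by
  induction M with
  | nil => simp [expandPath]
  | cons t M ih =>
    intro s hs
    simp only [expandPath, List.mem_cons] at hs
    rcases hs with rfl | rfl | hs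
    · unfold firstE; split_ifs <;> simp
    · unfold secondE; split_ifs <;> simp
    · exact ih s hs

lemma expand_get?_even (M : List ℤ) (k : ℕ) :
    (expandPath M)[2 * k]? = M[k]?.map firstE := by
  induction M generalizing k with
  | nil => rfl
  | cons s M ih =>
    cases k with
    | zero => rfl
    | succ k =>
      have e : 2 * (k + 1) = (2 * k + 1) + 1 := by omega
      show (firstE s :: secondE s :: expandPath M)[2 * (k+1)]? = _
      rw [e, List.getElem?_cons_succ, List.getElem?_cons_succ, ih, List.getElem?_cons_succ]

lemma expand_get?_odd (M : List ℤ) (k : ℕ) :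
    (expandPath M)[2 * k + 1]? = M[k]?.map secondE := by
  induction M generalizing k with
  | nil => rfl
  | cons s M ih =>
    cases k with
    | zero => rfl
    | succ k =>
      have e : 2 * (k + 1) + 1 = (2 * k + 1 + 1) + 1 := by omega
      show (firstE s :: secondE s :: expandPath M)[2 * (k+1) + 1]? = _
      rw [e, List.getElem?_cons_succ, List.getElem?_cons_succ, ih, List.getElem?_cons_succ]

lemma expand_take_even (M : List ℤ) (h : ∀ s ∈ M, s = 1 ∨ s = 0 ∨ s = -1) (k : ℕ) :
    ((expandPath M).take (2 * k)).sum = 2 * (M.take k).sum := by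
  induction M generalizing k with
  | nil => simp [expandPath]
  | cons s M ih =>
    cases k with
    | zero => simp
    | succ k =>
      have e : 2 * (k + 1) = (2 * k) + 1 + 1 := by omega
      have hs := h s (by simp)
      have hM : ∀ t ∈ M, t = 1 ∨ t = 0 ∨ t = -1 := fun t ht => h t (by simp [ht])
      show ((firstE s :: secondE s :: expandPath M).take (2 * (k+1))).sum = _
      rw [e, List.take_succ_cons, List.take_succ_cons, List.sum_cons, List.sum_cons,
        ih hM, List.take_succ_cons, List.sum_cons]
      rcases hs with rfl | rfl | rfl <;> norm_num [firstE, secondE] <;> ring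

lemma expand_take_odd (M : List ℤ) (h : ∀ s ∈ M, s = 1 ∨ s = 0 ∨ s = -1) (k : ℕ) :
    ((expandPath M).take (2 * k + 1)).sum = 2 * (M.take k).sum + (M[k]?).elim 0 firstE := by
  induction M generalizing k with
  | nil => simp [expandPath]
  | cons s M ih =>
    cases k with
    | zero => simp [expandPath]
    | succ k =>
      have e : 2 * (k + 1) + 1 = (2 * k + 1) + 1 + 1 := by omega
      have hs := h s (by simp)
      have hM : ∀ t ∈ M, t = 1 ∨ t = 0 ∨ t = -1 := fun t ht => h t (by simp [ht])
      show ((firstE s :: secondE s :: expandPath M).take (2 * (k+1) + 1)).sum = _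
      rw [e, List.take_succ_cons, List.take_succ_cons, List.sum_cons, List.sum_cons,
        ih hM, List.take_succ_cons, List.sum_cons, List.getElem?_cons_succ]
      rcases hs with rfl | rfl | rfl <;> norm_num [firstE, secondE] <;> ring

lemma contract_expand (M : List ℤ) (h : ∀ s ∈ M, s = 1 ∨ s = 0 ∨ s = -1) :
    pairContract (expandPath M) = M := by
  induction M with
  | nil => rfl
  | cons s M ih =>
    have hs := h s (by simp)
    have hM : ∀ t ∈ M, t = 1 ∨ t = 0 ∨ t = -1 := fun t ht => h t (by simp [ht])
    show pairContract (firstE s :: secondE s :: expandPath M) = s :: M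
    rw [pairContract_cons, ih hM]
    rcases hs with rfl | rfl | rfl <;> norm_num [pairStep, firstE, secondE]

lemma sum_sub_length_even (P : List ℤ) (h : ∀ s ∈ P, s = 1 ∨ s = -1) :
    Even (P.sum - P.length) := by
  induction P with
  | nil => simp
  | cons s P ih =>
    have hs := h s (by simp)
    have hP : ∀ t ∈ P, t = 1 ∨ t = -1 := fun t ht => h t (by simp [ht])
    obtain ⟨r, hr⟩ := ih hP
    rcases hs with rfl | rfl
    · exact ⟨r, by simp only [List.sum_cons, List.length_cons] at *; push_cast; omega⟩
    · exact ⟨r - 1, by simp only [List.sum_cons, List.length_cons] at *; push_cast; omega⟩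

lemma noPairUD (P : List ℤ) (hD : IsDyckPath P) (hE : AllPeaksEven P) (k : ℕ) :
    ¬(P[2 * k]? = some 1 ∧ P[2 * k + 1]? = some (-1)) := by
  rintro ⟨h1, h2⟩
  have he := hE.2 (2 * k) ⟨h1, h2⟩
  unfold peakHeight at he
  have hlen : 2 * k + 1 < P.length := by obtain ⟨h, _⟩ := List.getElem?_eq_some_iff.mp h2; exact h
  have hP1 : ∀ s ∈ P.take (2 * k + 1), s = 1 ∨ s = -1 :=
    fun s hs => hD.1 s (List.mem_of_mem_take hs)
  have hpar := sum_sub_length_even _ hP1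
  rw [List.length_take] at hpar
  have hmin : min (2 * k + 1) P.length = 2 * k + 1 := by omega
  rw [hmin] at hpar
  obtain ⟨r, hr⟩ := he
  obtain ⟨t, ht⟩ := hpar
  push_cast at ht
  omega

lemma expand_contract : ∀ (m : ℕ) (P : List ℤ), P.length = 2 * m →
    (∀ s ∈ P, s = 1 ∨ s = -1) →
    (∀ k, ¬(P[2 * k]? = some 1 ∧ P[2 * k + 1]? = some (-1))) →
    expandPath (pairContract P) = P := by
  intro m
  induction m with
  | zero =>
    intro P hl _ _
    rw [List.length_eq_zero_iff.mp hl]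
    rfl
  | succ m ih =>
    intro P hl hs hnp
    match P with
    | [] => simp at hl
    | [a] => simp at hl; omega
    | a :: b :: rest =>
      have hlr : rest.length = 2 * m := by simp at hl; omega
      have ha := hs a (by simp)
      have hb := hs b (by simp)
      have hrest_s : ∀ t ∈ rest, t = 1 ∨ t = -1 := fun t ht => hs t (by simp [ht])
      have hrest_np : ∀ k, ¬(rest[2 * k]? = some 1 ∧ rest[2 * k + 1]? = some (-1)) := by
        intro k hk
        refine hnp (k + 1) ?_
        have e1 : 2 * (k + 1) = (2 * k + 1) + 1 := by omega
        rw [e1]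
        simp only [List.getElem?_cons_succ]
        exact hk
      rw [pairContract_cons]
      show firstE (pairStep a b) :: secondE (pairStep a b) :: expandPath (pairContract rest)
        = a :: b :: rest
      rw [ih rest hlr hrest_s hrest_np]
      rcases ha with rfl | rfl <;> rcases hb with rfl | rfl
      · norm_num [pairStep, firstE, secondE]
      · exact absurd ⟨rfl, rfl⟩ (hnp 0)
      · norm_num [pairStep, firstE, secondE]
      · norm_num [pairStep, firstE, secondE]

lemma expand_peaksEven (M : List ℤ) (h3 : ∀ s ∈ M, s = 1 ∨ s = 0 ∨ s = -1) :
    AllPeaksEven (expandPath M) := by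
  refine ⟨fun _ => Even.zero, ?_⟩
  intro i hp
  rcases Nat.even_or_odd i with ⟨k, hk⟩ | ⟨k, hk⟩
  · exfalso
    have hik : i = 2 * k := by omega
    obtain ⟨h1, h2⟩ := hp
    rw [hik, expand_get?_even] at h1
    obtain ⟨s, hks, hfs⟩ := Option.map_eq_some_iff.mp h1
    have hs1 : s = 1 := by
      by_contra hne
      simp [firstE, hne] at hfs
    subst hs1
    rw [hik, expand_get?_odd, hks] at h2
    simp [secondE] at h2
  · have hik : i + 1 = 2 * (k + 1) := by omega
    unfold peakHeight
    rw [hik, expand_take_even M h3]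
    exact ⟨(M.take (k+1)).sum, by ring⟩
/-- For `n ≥ 0`, contracting contiguous pairs (U,U) ↦ U, (D,U) ↦ F, (D,D) ↦ D is a
bijection from Dyck paths of semilength `n` with all peaks at even height onto Motzkin
paths of length `n` with no flatstep at ground level. -/
theorem pairContract_even_bijOn (n : ℕ) :
    Set.BijOn pairContract
      {P : List ℤ | P.length = 2 * n ∧ IsDyckPath P ∧ AllPeaksEven P}
      {M : List ℤ | M.length = n ∧ IsMotzkinPath M ∧ NoGroundFlat M} := by
  refine ⟨?_, ?_, ?_⟩
  · -- MapsTo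
    rintro P ⟨hl, hD, hE⟩
    have hnp := noPairUD P hD hE
    have hPB : expandPath (pairContract P) = P := expand_contract n P hl hD.1 hnp
    set M := pairContract P with hMdef
    have hM3 := steps3_pairContract P
    have hMl : M.length = n := by rw [hMdef, pairContract_length, hl]; omega
    have hpre : ∀ k, 0 ≤ (M.take k).sum := by
      intro k
      have h1 := expand_take_even M hM3 k
      rw [hPB] at h1
      have h2 := hD.2.1 (2 * k)
      omega
    have hfull : P.take (2 * M.length) = P := by
      rw [hMl, ← hl]; exact List.take_length
    have hsum : M.sum = 0 := by
      have h1 := expand_take_even M hM3 M.length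
      rw [hPB, hfull, List.take_length, hD.2.2] at h1
      omega
    refine ⟨hMl, ⟨hM3, hpre, hsum⟩, ?_⟩
    intro i hi h0
    have h1 := expand_take_odd M hM3 i
    rw [hPB, hi, h0] at h1
    norm_num [firstE] at h1
    have h2 := hD.2.1 (2 * i + 1)
    omega
  · -- InjOn
    rintro P1 ⟨hl1, hD1, hE1⟩ P2 ⟨hl2, hD2, hE2⟩ heq
    have e1 := expand_contract n P1 hl1 hD1.1 (noPairUD P1 hD1 hE1)
    have e2 := expand_contract n P2 hl2 hD2.1 (noPairUD P2 hD2 hE2)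
    rw [← e1, heq, e2]
  · -- SurjOn
    rintro M ⟨hl, ⟨h3, hpre, hsum⟩, hgf⟩
    refine ⟨expandPath M, ⟨?_, ⟨expand_steps M, ?_, ?_⟩, ?_⟩, contract_expand M h3⟩
    · rw [expandPath_length, hl]
    · intro k
      rcases Nat.even_or_odd k with ⟨j, hj⟩ | ⟨j, hj⟩
      · have hk : k = 2 * j := by omega
        rw [hk, expand_take_even M h3]
        have := hpre j
        omega
      · have hk : k = 2 * j + 1 := by omega
        rw [hk, expand_take_odd M h3]
        rcases hg : M[j]? with _ | s
        · simp only [hg, Option.elim]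
          have := hpre j
          omega
        · have hsucc : (M.take (j + 1)).sum = (M.take j).sum + s := by
            rw [List.take_succ, List.sum_append, hg]
            simp
          have hs3 := h3 s (List.mem_of_getElem? hg)
          have hpj := hpre j
          rcases hs3 with rfl | rfl | rfl
          · simp only [hg, Option.elim]
            norm_num [firstE]
            omega
          · have hne := hgf j hg
            simp only [hg, Option.elim]
            norm_num [firstE]
            omega
          · have hpj1 := hpre (j + 1)
            rw [hsucc] at hpj1
            simp only [hg, Option.elim]
            norm_num [firstE]
            omega
    · have h1 := expand_take_even M h3 M.length
      rw [← expandPath_length, List.take_length, List.take_length, hsum] at h1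
      omega
    · exact expand_peaksEven M h3
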